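/- Let T be a finite tree on n ≥ 2 vertices with vertex 0 as root and nonzero susceptances. Then the set of real solutions to the lossless zero-injection power flow equations on T consists exactly of the 2^{n−1} trivial solutions, i.e., points with y_k = 0 and x_k ∈ {−1, 1} for k = 1,…,n−1. -/

import Mathlib

/-!
The line flows `F k m = b k m * (x k * y m - x m * y k)` are antisymmetric and supported on the
edges of `T`, and the equations say that their divergence `∑ m, F k m` vanishes at every `k ≠ 0`;
by antisymmetry it then vanishes at `0` too. Deleting an edge `uv` of a tree splits it into two
components, and summing the divergence over the component of `u` leaves only `F u v`, so every
line flow is zero. Hence adjacent unit vectors `(x k, y k)` are parallel, and since `(x 0, y 0)`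
is `(1, 0)`, all `y k` vanish and `x k = ±1`.
-/

open Finset

section Antisymmetric

variable {V M : Type*} [Fintype V] [AddCommGroup M] [IsAddTorsionFree M] {F : V → V → M}

theorem sum_sum_eq_sum_sum_compl_of_antisymm [DecidableEq V] (hanti : ∀ k m, F m k = -F k m)
    (C : Finset V) : ∑ k ∈ C, ∑ m, F k m = ∑ k ∈ C, ∑ m ∈ Cᶜ, F k m := by
  have hC : ∑ k ∈ C, ∑ m ∈ C, F k m = 0 := by
    refine self_eq_neg.mp ?_
    calc ∑ k ∈ C, ∑ m ∈ C, F k m = ∑ k ∈ C, ∑ m ∈ C, F m k := sum_comm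
      _ = -∑ k ∈ C, ∑ m ∈ C, F k m := by simp only [← sum_neg_distrib, ← hanti]
  simp only [← sum_add_sum_compl C, sum_add_distrib, hC, zero_add]

theorem sum_sum_eq_zero_of_antisymm (hanti : ∀ k m, F m k = -F k m) : ∑ k, ∑ m, F k m = 0 := by
  classical
  simpa using sum_sum_eq_sum_sum_compl_of_antisymm hanti univ

theorem sum_eq_zero_of_antisymm_of_forall_ne (hanti : ∀ k m, F m k = -F k m)
    {r : V} (h : ∀ k, k ≠ r → ∑ m, F k m = 0) (k : V) : ∑ m, F k m = 0 := by
  obtain rfl | hk := eq_or_ne k r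
  · rw [← sum_sum_eq_zero_of_antisymm hanti, sum_eq_single k (fun l _ hl ↦ h l hl) (by simp)]
  · exact h k hk

end Antisymmetric

namespace SimpleGraph

variable {V : Type*} {G : SimpleGraph V}

theorem IsBridge.eq_of_adj_of_reachable_deleteEdges {u v k m : V} (hb : G.IsBridge s(u, v))
    (hk : (G.deleteEdges {s(u, v)}).Reachable u k)
    (hm : ¬ (G.deleteEdges {s(u, v)}).Reachable u m) (hadj : G.Adj k m) : k = u ∧ m = v := by
  by_cases hkm : s(k, m) = s(u, v)
  · rcases Sym2.eq_iff.mp hkm with h | ⟨hkv, -⟩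
    · exact h
    · exact absurd (hkv ▸ hk) (isBridge_iff.mp hb)
  · exact absurd (hk.trans (Adj.reachable (deleteEdges_adj.mpr ⟨hadj, hkm⟩))) hm

theorem Preconnected.forall_of_adj {P : V → Prop} (hG : G.Preconnected) {r : V} (hr : P r)
    (hP : ∀ u v, G.Adj u v → P u → P v) (v : V) : P v := by
  obtain ⟨p⟩ := hG r v
  induction p with
  | nil => exact hr
  | cons h _ ih => exact ih (hP _ _ h hr)

theorem IsAcyclic.eq_zero_of_sum_eq_zero [Fintype V] {M : Type*} [AddCommGroup M]
    [IsAddTorsionFree M] {F : V → V → M} (hG : G.IsAcyclic) (hanti : ∀ k m, F m k = -F k m)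
    (hsupp : ∀ k m, ¬ G.Adj k m → F k m = 0) (hdiv : ∀ k, ∑ m, F k m = 0) (u v : V) :
    F u v = 0 := by
  classical
  by_cases hadj : G.Adj u v
  · have hb := isAcyclic_iff_forall_adj_isBridge.mp hG hadj
    let C := {k | (G.deleteEdges {s(u, v)}).Reachable u k}.toFinset
    have hcut : ∑ k ∈ C, ∑ m ∈ Cᶜ, F k m = F u v := by
      rw [← sum_product']
      refine sum_eq_single_of_mem (u, v) (by simpa [C] using isBridge_iff.mp hb) ?_
      rintro ⟨k, m⟩ hkm hne
      simp only [C, mem_product, mem_compl, Set.mem_toFinset, Set.mem_ofPred_eq] at hkm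
      by_contra hF
      exact hne (Prod.ext_iff.mpr
        (hb.eq_of_adj_of_reachable_deleteEdges hkm.1 hkm.2 (not_imp_comm.mp (hsupp k m) hF)))
    rw [← hcut, ← sum_sum_eq_sum_sum_compl_of_antisymm hanti]
    exact sum_eq_zero fun k _ ↦ hdiv k
  · exact hsupp u v hadj

end SimpleGraph

section PowerFlow

variable {V : Type*} [Fintype V] {G : SimpleGraph V} {b : V → V → ℝ} {r : V} {x y : V → ℝ}

theorem lineFlow_eq_zero (hG : G.IsAcyclic) (hsym : ∀ k m, b k m = b m k)
    (hb0 : ∀ k m, ¬ G.Adj k m → b k m = 0)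
    (hflow : ∀ k, k ≠ r → ∑ m, b k m * (x k * y m - x m * y k) = 0) (k m : V) :
    b k m * (x k * y m - x m * y k) = 0 := by
  have hanti (k m : V) : b m k * (x m * y k - x k * y m) = -(b k m * (x k * y m - x m * y k)) := by
    rw [hsym]; ring
  exact hG.eq_zero_of_sum_eq_zero hanti (fun k m h ↦ by simp [hb0 k m h])
    (sum_eq_zero_of_antisymm_of_forall_ne hanti hflow) k m

theorem eq_trivial_of_powerFlow (hT : G.IsTree) (hsym : ∀ k m, b k m = b m k)
    (hbne : ∀ k m, G.Adj k m → b k m ≠ 0) (hb0 : ∀ k m, ¬ G.Adj k m → b k m = 0)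
    (hx : x r = 1) (hy : y r = 0)
    (h : ∀ k, k ≠ r → x k ^ 2 + y k ^ 2 = 1 ∧ ∑ m, b k m * (x k * y m - x m * y k) = 0) (k : V) :
    y k = 0 ∧ (x k = 1 ∨ x k = -1) := by
  have hflow := lineFlow_eq_zero hT.isAcyclic hsym hb0 fun k hk ↦ (h k hk).2
  have hunit (k : V) : x k ^ 2 + y k ^ 2 = 1 := by
    by_cases hk : k = r
    · simp [hk, hx, hy]
    · exact (h k hk).1
  have hy0 : ∀ k, y k = 0 := by
    refine hT.connected.preconnected.forall_of_adj hy fun u v huv hu ↦ ?_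
    have hxu : x u ≠ 0 := by
      intro h0
      simpa [h0, hu] using hunit u
    have hcross : x u * y v - x v * y u = 0 :=
      (mul_eq_zero.mp (hflow u v)).resolve_left (hbne u v huv)
    rw [hu, mul_zero, sub_zero] at hcross
    exact (mul_eq_zero.mp hcross).resolve_left hxu
  exact ⟨hy0 k, sq_eq_one_iff.mp (by simpa [hy0 k] using hunit k)⟩

theorem powerFlow_of_trivial (hy : y r = 0) (h : ∀ k, k ≠ r → y k = 0 ∧ (x k = 1 ∨ x k = -1))
    (k : V) (hk : k ≠ r) : x k ^ 2 + y k ^ 2 = 1 ∧ ∑ m, b k m * (x k * y m - x m * y k) = 0 := by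
  have hy0 (m : V) : y m = 0 := by
    by_cases hm : m = r
    · rwa [hm]
    · exact (h m hm).1
  refine ⟨?_, sum_eq_zero fun m _ ↦ by simp [hy0]⟩
  rcases (h k hk).2 with hxk | hxk <;> simp [hxk, hy0]

end PowerFlow

theorem card_trivial_solutions {V : Type*} [Fintype V] [DecidableEq V] (r : V) :
    Nat.card {p : (V → ℝ) × (V → ℝ) //
      p.1 r = 1 ∧ p.2 r = 0 ∧ ∀ k, k ≠ r → p.2 k = 0 ∧ (p.1 k = 1 ∨ p.1 k = -1)} =
      2 ^ (Fintype.card V - 1) := by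
  let e : {p : (V → ℝ) × (V → ℝ) //
      p.1 r = 1 ∧ p.2 r = 0 ∧ ∀ k, k ≠ r → p.2 k = 0 ∧ (p.1 k = 1 ∨ p.1 k = -1)} ≃
      ({k // k ≠ r} → ({1, -1} : Set ℝ)) :=
    { toFun p k := ⟨p.1.1 k, (p.2.2.2 k k.2).2⟩
      invFun f := ⟨(fun k ↦ if h : k = r then 1 else f ⟨k, h⟩, 0),
        by simp, rfl, fun k hk ↦ ⟨rfl, by simp only [dif_neg hk]; exact (f ⟨k, hk⟩).2⟩⟩
      left_inv p := by
        obtain ⟨⟨x, y⟩, hx, hy, h⟩ := p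
        dsimp only at hx hy h
        ext k <;> obtain rfl | hk := eq_or_ne k r
        · simp [hx]
        · simp [hk]
        · simp [hy]
        · simp [(h k hk).1]
      right_inv f := by
        ext k
        simp [k.2] }
  rw [Nat.card_congr e, Nat.card_fun, Nat.card_coe_set_eq, Set.ncard_pair (by norm_num)]
  simp

theorem stmt_14 (n : ℕ) (hn : 2 ≤ n) (G : SimpleGraph (Fin n)) (hT : G.IsTree)
    (b : Fin n → Fin n → ℝ) (hsym : ∀ k m, b k m = b m k)
    (hbne : ∀ k m, G.Adj k m → b k m ≠ 0)
    (hb0 : ∀ k m, ¬ G.Adj k m → b k m = 0) :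
    (∀ x y : Fin n → ℝ, x ⟨0, by omega⟩ = 1 → y ⟨0, by omega⟩ = 0 →
      ((∀ k, k ≠ (⟨0, by omega⟩ : Fin n) →
          x k ^ 2 + y k ^ 2 = 1 ∧
          ∑ m ∈ Finset.univ, b k m * (x k * y m - x m * y k) = 0)
        ↔ (∀ k, k ≠ (⟨0, by omega⟩ : Fin n) → y k = 0 ∧ (x k = 1 ∨ x k = -1))))
    ∧ Nat.card {p : (Fin n → ℝ) × (Fin n → ℝ) //
        p.1 ⟨0, by omega⟩ = 1 ∧ p.2 ⟨0, by omega⟩ = 0 ∧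
        ∀ k, k ≠ (⟨0, by omega⟩ : Fin n) →
          p.1 k ^ 2 + p.2 k ^ 2 = 1 ∧
          ∑ m ∈ Finset.univ, b k m * (p.1 k * p.2 m - p.1 m * p.2 k) = 0} =
      2 ^ (n - 1) := by
  set r : Fin n := ⟨0, by omega⟩
  have hsolve (x y : Fin n → ℝ) (hx : x r = 1) (hy : y r = 0) :
      (∀ k, k ≠ r → x k ^ 2 + y k ^ 2 = 1 ∧ ∑ m, b k m * (x k * y m - x m * y k) = 0) ↔
        ∀ k, k ≠ r → y k = 0 ∧ (x k = 1 ∨ x k = -1) :=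
    ⟨fun h k _ ↦ eq_trivial_of_powerFlow hT hsym hbne hb0 hx hy h k, powerFlow_of_trivial hy⟩
  refine ⟨hsolve, ?_⟩
  refine (Nat.card_congr (Equiv.subtypeEquivRight fun p ↦ and_congr_right fun hx ↦
    and_congr_right fun hy ↦ hsolve p.1 p.2 hx hy)).trans ?_
  simpa using card_trivial_solutions r
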